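/- Let R be a unital associative ring and let J = J₂ ∘ J₁ act on 2×2 matrices over R. Then dom(J) = dom(J⁻¹) = M₂*(R) ∩ M₂⋆(R), and a matrix A = [[a,b],[c,d]] belongs to this common domain if and only if a, b, c, d and db⁻¹ − ca⁻¹ are invertible in R. J maps dom(J) bijectively onto itself and is given there by the formula J(A) = [[a − bd⁻¹c, b − ac⁻¹d], [c − db⁻¹a, d − ca⁻¹b]]. Furthermore, J(A) ∼ J⁻¹(A) for every A ∈ dom(J); consequently J²(A) ∼ A for every A ∈ dom(J). -/

import Mathlib

open Matrix

section KontsevichDefs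

variable {R : Type*} [Ring R]

/-- `J₂`: the transposed Hadamard inverse, `J₂(M)_{jk} = (M_{kj})⁻¹`
(with `Ring.inverse`, which is the two-sided inverse on units and `0` elsewhere). -/
noncomputable def J2 {m : Type*} (M : Matrix m m R) : Matrix m m R :=
  Matrix.of fun j k => Ring.inverse (M k j)

variable {m : Type*} [Fintype m] [DecidableEq m]

/-- `J = J₂ ∘ J₁`, where `J₁(M) = M⁻¹` is the usual matrix inverse. -/
noncomputable def Jmap (M : Matrix m m R) : Matrix m m R := J2 (Ring.inverse M)

/-- `J⁻¹ = J₁ ∘ J₂`. -/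
noncomputable def JinvMap (M : Matrix m m R) : Matrix m m R := Ring.inverse (J2 M)

/-- `dom(J)`: `M` invertible and all entries of `M⁻¹` invertible. -/
def domJ (M : Matrix m m R) : Prop :=
  IsUnit M ∧ ∀ j k, IsUnit (Ring.inverse M j k)

/-- `dom(J⁻¹)`: all entries of `M` invertible and `J₂(M)` invertible. -/
def domJinv (M : Matrix m m R) : Prop :=
  (∀ j k, IsUnit (M j k)) ∧ IsUnit (J2 M)

/-- `dom(Jⁿ)` defined recursively: `M ∈ dom(Jⁿ⁺¹)` iff `M ∈ dom(J)` and `J(M) ∈ dom(Jⁿ)`. -/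
def domJpow : ℕ → Matrix m m R → Prop
  | 0, _ => True
  | n + 1, M => domJ M ∧ domJpow n (Jmap M)

/-- `A ∼ B`: `B = D₁⁻¹ A D₂` for diagonal matrices `D₁, D₂` with invertible diagonal entries. -/
def simRel (A B : Matrix m m R) : Prop :=
  ∃ d₁ d₂ : m → Rˣ,
    B = Matrix.diagonal (fun i => (((d₁ i)⁻¹ : Rˣ) : R)) * A *
        Matrix.diagonal (fun i => ((d₂ i : Rˣ) : R))

/-- entrywise conjugation `x⁻¹ A x` by an invertible ring element. -/
def conjEntry {m' : Type*} (x : Rˣ) (A : Matrix m' m' R) : Matrix m' m' R :=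
  Matrix.of fun j k => ((x⁻¹ : Rˣ) : R) * A j k * (x : R)

/-- `M̂ₙ(R)`: first row and first column consist entirely of `1`'s. -/
def Mhat {m' : Type*} [Zero m'] (A : Matrix m' m' R) : Prop :=
  ∀ k, A 0 k = 1 ∧ A k 0 = 1

/-- `Λ^L(A)_{jk} = a₁₁ a_{j1}⁻¹ a_{jk} a_{1k}⁻¹`. -/
noncomputable def LamL {m' : Type*} [Zero m'] (A : Matrix m' m' R) : Matrix m' m' R :=
  Matrix.of fun j k => A 0 0 * Ring.inverse (A j 0) * A j k * Ring.inverse (A 0 k)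

/-- `Λ^R(A)_{jk} = a_{j1}⁻¹ a_{jk} a_{1k}⁻¹ a₁₁`. -/
noncomputable def LamR {m' : Type*} [Zero m'] (A : Matrix m' m' R) : Matrix m' m' R :=
  Matrix.of fun j k => Ring.inverse (A j 0) * A j k * Ring.inverse (A 0 k) * A 0 0

/-- `Φ(A) = J₂(Λ^L(A⁻¹))`. -/
noncomputable def Phi [Zero m] (A : Matrix m m R) : Matrix m m R := J2 (LamL (Ring.inverse A))

/-- `dom(Φ)`: `A ∈ M̂ₙ(R)`, all entries of `A` invertible, `A` invertible,
all entries of `A⁻¹` invertible. -/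
def domPhi [Zero m] (A : Matrix m m R) : Prop :=
  Mhat A ∧ (∀ j k, IsUnit (A j k)) ∧ IsUnit A ∧ ∀ j k, IsUnit (Ring.inverse A j k)

/-- `Φ⁻¹(B) = Λ^R(J⁻¹(B)) = Λ^R((J₂ B)⁻¹)`. -/
noncomputable def PhiInv [Zero m] (B : Matrix m m R) : Matrix m m R := LamR (Ring.inverse (J2 B))

/-- `dom(Φ⁻¹)`: `B ∈ M̂ₙ(R)`, all entries of `B` invertible, `J₂(B)` invertible,
all entries of `J₂(B)⁻¹` invertible. -/
def domPhiInv [Zero m] (B : Matrix m m R) : Prop :=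
  Mhat B ∧ (∀ j k, IsUnit (B j k)) ∧ IsUnit (J2 B) ∧ ∀ j k, IsUnit (Ring.inverse (J2 B) j k)

/-- `dom(Φⁿ)` defined recursively. -/
def domPhipow [Zero m] : ℕ → Matrix m m R → Prop
  | 0, _ => True
  | n + 1, A => domPhi A ∧ domPhipow n (Phi A)

/-- `Ψ = J₂ ∘ Φ ∘ J₂`. -/
noncomputable def Psi [Zero m] (A : Matrix m m R) : Matrix m m R := J2 (Phi (J2 A))

/-- `dom(Ψ)`: `A ∈ M̂ₙ(R)`, all entries of `A` invertible, `J₂(A) ∈ dom(Φ)`. -/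
def domPsi [Zero m] (A : Matrix m m R) : Prop :=
  Mhat A ∧ (∀ j k, IsUnit (A j k)) ∧ domPhi (J2 A)

/-- every square submatrix (equinumerous injective choices of rows and columns) is invertible. -/
def allSquareSubInv (M : Matrix (Fin 3) (Fin 3) R) : Prop :=
  ∀ (k : ℕ) (r c : Fin k → Fin 3), Function.Injective r → Function.Injective c →
    IsUnit (M.submatrix r c)

/-- only the `1×1` and `2×2` submatrices are required to be invertible. -/
def sub12Inv (M : Matrix (Fin 3) (Fin 3) R) : Prop :=
  (∀ j k, IsUnit (M j k)) ∧
  ∀ (r c : Fin 2 → Fin 3), Function.Injective r → Function.Injective c →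
    IsUnit (M.submatrix r c)

/-- `S`: all square submatrices of `M` are invertible and `J₂(M)` is invertible. -/
def Sset (R : Type*) [Ring R] : Set (Matrix (Fin 3) (Fin 3) R) :=
  {M | allSquareSubInv M ∧ IsUnit (J2 M)}

/-- `Ŝ = S ∩ M̂₃(R)`. -/
def Shat (R : Type*) [Ring R] : Set (Matrix (Fin 3) (Fin 3) R) :=
  {M | M ∈ Sset R ∧ Mhat M}

end KontsevichDefs

/-!
For `M = !![a, b; c, d]` with `a` a unit, `M = !![1, 0; c a⁻¹, 1] · diag(a, d - c a⁻¹ b) · !![1, a⁻¹ b; 0, 1]`,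
so `M` is invertible iff its Schur complement is. When all entries are units this says that
`u = d b⁻¹ - c a⁻¹` is a unit, and then
`M⁻¹ = !![a⁻¹u⁻¹db⁻¹, -a⁻¹u⁻¹; -b⁻¹u⁻¹ca⁻¹, b⁻¹u⁻¹]` again has unit entries; applied to `M⁻¹` this gives
`dom(J) = M₂*(R) ∩ M₂⋆(R)`. For `J₂ M = !![a⁻¹, c⁻¹; b⁻¹, d⁻¹]` the corresponding element is `-d⁻¹ u a`,
so `dom(J⁻¹)` is the same set; in any size `J` and `J⁻¹` are mutually inverse bijections
`dom(J) → dom(J⁻¹)`. Explicitly `J(M) = !![b d⁻¹ u a, -a c⁻¹ u b; -u a, u b]` and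
`J⁻¹(M) = !![-u⁻¹ c, u⁻¹ d; c a⁻¹ u⁻¹ d b⁻¹ a, -c a⁻¹ u⁻¹ d]`, whose rows are left multiples of those
of `J(M)`; the one entry where this is not a group identity follows from
`x y⁻¹ (x - y) = (x - y) y⁻¹ x` with `x = d b⁻¹`, `y = c a⁻¹`. Applying `J(N) ∼ J⁻¹(N)` to `N = J(M)`
gives `J²(M) ∼ M`.
-/

section General

variable {R : Type*} [Ring R] {m : Type*}

lemma J2_J2 {M : Matrix m m R} (h : ∀ j k, IsUnit (M j k)) : J2 (J2 M) = M := by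
  ext j k
  exact Ring.inverse_inverse (h j k)

lemma isUnit_J2_apply {M : Matrix m m R} (h : ∀ j k, IsUnit (M j k)) (j k : m) :
    IsUnit (J2 M j k) :=
  (h k j).ringInverse

variable [Fintype m] [DecidableEq m]

lemma domJinv_Jmap {M : Matrix m m R} (h : domJ M) : domJinv (Jmap M) := by
  refine ⟨isUnit_J2_apply h.2, ?_⟩
  rw [Jmap, J2_J2 h.2]
  exact h.1.ringInverse

lemma domJ_JinvMap {M : Matrix m m R} (h : domJinv M) : domJ (JinvMap M) := by
  refine ⟨h.2.ringInverse, ?_⟩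
  rw [JinvMap, Ring.inverse_inverse h.2]
  exact isUnit_J2_apply h.1

lemma JinvMap_Jmap {M : Matrix m m R} (h : domJ M) : JinvMap (Jmap M) = M := by
  rw [JinvMap, Jmap, J2_J2 h.2, Ring.inverse_inverse h.1]

lemma Jmap_JinvMap {M : Matrix m m R} (h : domJinv M) : Jmap (JinvMap M) = M := by
  rw [Jmap, JinvMap, Ring.inverse_inverse h.2, J2_J2 h.1]

theorem bijOn_Jmap : Set.BijOn (Jmap (R := R) (m := m)) {M | domJ M} {M | domJinv M} :=
  Set.InvOn.bijOn ⟨fun _ => JinvMap_Jmap, fun _ => Jmap_JinvMap⟩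
    (fun _ => domJinv_Jmap) (fun _ => domJ_JinvMap)

end General

theorem Matrix.isUnit_diagonal' {n α : Type*} [Fintype n] [DecidableEq n] [Semiring α]
    {v : n → α} : IsUnit (diagonal v) ↔ IsUnit v := by
  refine ⟨fun ⟨U, hU⟩ => Pi.isUnit_iff.2 fun i => ?_, fun h => h.map (diagonalRingHom n α)⟩
  have hr := congr_fun₂ U.mul_inv i i
  have hl := congr_fun₂ U.inv_mul i i
  rw [hU, diagonal_mul, one_apply_eq] at hr
  rw [hU, mul_diagonal, one_apply_eq] at hl
  exact ⟨⟨v i, _, hr, hl⟩, rfl⟩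

lemma mul_inv_mul_sub_eq_sub_mul_inv_mul {R : Type*} [Ring R] (x : R) (y : Rˣ) :
    x * ↑y⁻¹ * (x - y) = (x - y) * ↑y⁻¹ * x := by
  simp [mul_sub, sub_mul, mul_assoc]

section TwoByTwo

variable {R : Type*} [Ring R]

lemma isUnit_lower_unitriangular_fin_two (x : R) : IsUnit !![1, 0; x, 1] :=
  ⟨⟨!![1, 0; x, 1], !![1, 0; -x, 1], by simp [one_fin_two], by simp [one_fin_two]⟩, rfl⟩

lemma isUnit_upper_unitriangular_fin_two (x : R) : IsUnit !![1, x; 0, 1] :=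
  ⟨⟨!![1, x; 0, 1], !![1, -x; 0, 1], by simp [one_fin_two], by simp [one_fin_two]⟩, rfl⟩

theorem isUnit_fin_two_iff_schur (a : Rˣ) (b c d : R) :
    IsUnit !![(a : R), b; c, d] ↔ IsUnit (d - c * ↑a⁻¹ * b) := by
  have hfac : !![(a : R), b; c, d] =
      !![1, 0; c * ↑a⁻¹, 1] * diagonal ![(a : R), d - c * ↑a⁻¹ * b] * !![1, ↑a⁻¹ * b; 0, 1] := by
    simp [diagonal_vec2, mul_assoc]
  rw [hfac, ← (isUnit_lower_unitriangular_fin_two _).unit_spec,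
    ← (isUnit_upper_unitriangular_fin_two _).unit_spec, Units.isUnit_mul_units,
    Units.isUnit_units_mul, isUnit_diagonal', Pi.isUnit_iff, Fin.forall_fin_two]
  simp

theorem isUnit_fin_two_iff (a b c d : Rˣ) :
    IsUnit !![(a : R), b; c, d] ↔ IsUnit ((d : R) * ↑b⁻¹ - c * ↑a⁻¹) := by
  rw [isUnit_fin_two_iff_schur, ← Units.isUnit_mul_units _ b⁻¹, sub_mul,
    Units.mul_inv_cancel_right]

lemma J2_fin_two (a b c d : Rˣ) :
    J2 !![(a : R), b; c, d] = !![(↑a⁻¹ : R), ↑c⁻¹; ↑b⁻¹, ↑d⁻¹] := by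
  ext j k
  fin_cases j <;> fin_cases k <;> simp [J2]

lemma inv_mul_inv_inv_sub_eq_neg (a b c d : Rˣ) :
    (↑d⁻¹ * ↑c⁻¹⁻¹ - ↑b⁻¹ * ↑a⁻¹⁻¹ : R) = -(↑d⁻¹ * (↑d * ↑b⁻¹ - ↑c * ↑a⁻¹) * ↑a) := by
  simp [mul_sub, sub_mul, mul_assoc]

lemma isUnit_apply_fin_two_units (a b c d : Rˣ) (j k : Fin 2) :
    IsUnit (!![(a : R), b; c, d] j k) := by
  fin_cases j <;> fin_cases k <;> simp

lemma exists_units_eq_fin_two {M : Matrix (Fin 2) (Fin 2) R} (h : ∀ j k, IsUnit (M j k)) :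
    ∃ a b c d : Rˣ, M = !![(a : R), b; c, d] :=
  ⟨(h 0 0).unit, (h 0 1).unit, (h 1 0).unit, (h 1 1).unit, by simpa using M.eta_fin_two⟩

section Units

variable {a b c d u : Rˣ}

theorem ringInverse_fin_two (hu : (u : R) = d * ↑b⁻¹ - c * ↑a⁻¹) :
    Ring.inverse !![(a : R), b; c, d] =
      !![↑(a⁻¹ * u⁻¹ * d * b⁻¹), ↑(-(a⁻¹ * u⁻¹)); ↑(-(b⁻¹ * u⁻¹ * c * a⁻¹)), ↑(b⁻¹ * u⁻¹)] := by
  have hM : IsUnit !![(a : R), b; c, d] := (isUnit_fin_two_iff a b c d).2 (hu ▸ u.isUnit)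
  -- after eliminating `c`, every entry of the product is settled by cancellation alone
  have hc : (c : R) = (d * ↑b⁻¹ - u) * a := by rw [hu, sub_sub_cancel, Units.inv_mul_cancel_right]
  rw [← mul_one (Ring.inverse _), Ring.inverse_mul_eq_iff_eq_mul _ _ _ hM]
  simp only [mul_fin_two, one_fin_two, Units.val_mul, Units.val_neg, hc]
  simp [mul_sub, sub_mul, mul_assoc]

lemma Jmap_fin_two_units (hu : (u : R) = d * ↑b⁻¹ - c * ↑a⁻¹) :
    Jmap !![(a : R), b; c, d] =
      !![↑(b * d⁻¹ * u * a), ↑(-(a * c⁻¹ * u * b)); ↑(-(u * a)), ↑(u * b)] := by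
  rw [Jmap, ringInverse_fin_two hu, J2_fin_two]
  simp [mul_assoc]

lemma JinvMap_fin_two_units (hu : (u : R) = d * ↑b⁻¹ - c * ↑a⁻¹) :
    JinvMap !![(a : R), b; c, d] =
      !![↑(-(u⁻¹ * c)), ↑(u⁻¹ * d); ↑(c * a⁻¹ * u⁻¹ * d * b⁻¹ * a), ↑(-(c * a⁻¹ * u⁻¹ * d))] := by
  have hu' : ((-(d⁻¹ * u * a) : Rˣ) : R) = ↑d⁻¹ * ↑c⁻¹⁻¹ - ↑b⁻¹ * ↑a⁻¹⁻¹ := by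
    rw [inv_mul_inv_inv_sub_eq_neg, ← hu, Units.val_neg, Units.val_mul, Units.val_mul]
  rw [JinvMap, J2_fin_two, ringInverse_fin_two hu']
  simp [mul_assoc]

lemma simRel_Jmap_JinvMap_fin_two_units (hu : (u : R) = d * ↑b⁻¹ - c * ↑a⁻¹) :
    simRel (Jmap !![(a : R), b; c, d]) (JinvMap !![(a : R), b; c, d]) := by
  have hcomm : d * b⁻¹ * (a * c⁻¹) * u = u * (a * c⁻¹) * (d * b⁻¹) := Units.ext <| by
    simpa [hu, mul_assoc] using mul_inv_mul_sub_eq_sub_mul_inv_mul ((d : R) * ↑b⁻¹) (c * a⁻¹)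
  have hconj : u⁻¹ * (d * b⁻¹ * (a * c⁻¹)) * u = a * c⁻¹ * (d * b⁻¹) := by
    rw [mul_assoc, hcomm]; group
  let y : Fin 2 → Rˣ := ![-(u⁻¹ * c * a⁻¹ * u⁻¹ * d * b⁻¹), -(c * a⁻¹ * u⁻¹ * d * b⁻¹ * u⁻¹)]
  refine ⟨fun i => (y i)⁻¹, 1, ?_⟩
  rw [Jmap_fin_two_units hu, JinvMap_fin_two_units hu]
  ext j k
  fin_cases j <;> fin_cases k <;>
    simp only [y, diagonal_one, mul_one, diagonal_mul, inv_inv, Pi.one_apply, Units.val_one,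
      of_apply, cons_val', cons_val_zero, cons_val_one, cons_val_fin_one, Fin.zero_eta, Fin.mk_one,
      Fin.isValue, Units.val_neg, Units.val_mul, neg_mul, mul_neg, neg_neg, neg_inj] <;> norm_cast
  · group
  · calc u⁻¹ * d = u⁻¹ * c * a⁻¹ * (a * c⁻¹ * (d * b⁻¹)) * b := by group
      _ = u⁻¹ * c * a⁻¹ * (u⁻¹ * (d * b⁻¹ * (a * c⁻¹)) * u) * b := by rw [hconj]
      _ = _ := by group
  · group
  · group

end Units

lemma isUnit_ringInverse_apply_fin_two {M : Matrix (Fin 2) (Fin 2) R} (hM : IsUnit M)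
    (h : ∀ j k, IsUnit (M j k)) (j k : Fin 2) : IsUnit (Ring.inverse M j k) := by
  obtain ⟨a, b, c, d, rfl⟩ := exists_units_eq_fin_two h
  rw [ringInverse_fin_two ((isUnit_fin_two_iff a b c d).1 hM).unit_spec]
  exact isUnit_apply_fin_two_units _ _ _ _ j k

theorem domJ_fin_two_iff_isUnit {M : Matrix (Fin 2) (Fin 2) R} :
    domJ M ↔ IsUnit M ∧ ∀ j k, IsUnit (M j k) := by
  refine ⟨fun h => ⟨h.1, fun j k => ?_⟩, fun h => ⟨h.1, isUnit_ringInverse_apply_fin_two h.1 h.2⟩⟩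
  simpa [Ring.inverse_inverse h.1] using isUnit_ringInverse_apply_fin_two h.1.ringInverse h.2 j k

lemma isUnit_J2_fin_two_iff {M : Matrix (Fin 2) (Fin 2) R} (h : ∀ j k, IsUnit (M j k)) :
    IsUnit (J2 M) ↔ IsUnit M := by
  obtain ⟨a, b, c, d, rfl⟩ := exists_units_eq_fin_two h
  rw [J2_fin_two, isUnit_fin_two_iff, isUnit_fin_two_iff, inv_mul_inv_inv_sub_eq_neg,
    IsUnit.neg_iff, Units.isUnit_mul_units, Units.isUnit_units_mul]

theorem domJ_fin_two_iff_domJinv {M : Matrix (Fin 2) (Fin 2) R} : domJ M ↔ domJinv M := by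
  rw [domJ_fin_two_iff_isUnit, domJinv, and_comm]
  exact and_congr_right fun h => (isUnit_J2_fin_two_iff h).symm

theorem domJ_fin_two_iff (a b c d : R) :
    domJ !![a, b; c, d] ↔ IsUnit a ∧ IsUnit b ∧ IsUnit c ∧ IsUnit d ∧
      IsUnit (d * Ring.inverse b - c * Ring.inverse a) := by
  have hentries : (∀ j k, IsUnit (!![a, b; c, d] j k)) ↔
      IsUnit a ∧ IsUnit b ∧ IsUnit c ∧ IsUnit d := by
    simp [Fin.forall_fin_two, and_assoc]
  rw [domJ_fin_two_iff_isUnit, hentries]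
  constructor
  · rintro ⟨hM, ⟨a, rfl⟩, ⟨b, rfl⟩, ⟨c, rfl⟩, ⟨d, rfl⟩⟩
    simpa using (isUnit_fin_two_iff a b c d).1 hM
  · rintro ⟨⟨a, rfl⟩, ⟨b, rfl⟩, ⟨c, rfl⟩, ⟨d, rfl⟩, hu⟩
    rw [Ring.inverse_unit, Ring.inverse_unit] at hu
    exact ⟨(isUnit_fin_two_iff a b c d).2 hu, a.isUnit, b.isUnit, c.isUnit, d.isUnit⟩

theorem Jmap_fin_two {a b c d : R} (h : domJ !![a, b; c, d]) :
    Jmap !![a, b; c, d] =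
      !![a - b * Ring.inverse d * c, b - a * Ring.inverse c * d;
         c - d * Ring.inverse b * a, d - c * Ring.inverse a * b] := by
  obtain ⟨⟨a, rfl⟩, ⟨b, rfl⟩, ⟨c, rfl⟩, ⟨d, rfl⟩, hu⟩ := (domJ_fin_two_iff _ _ _ _).1 h
  simp only [Ring.inverse_unit] at hu ⊢
  rw [Jmap_fin_two_units hu.unit_spec]
  simp [mul_sub, sub_mul, mul_assoc]

theorem simRel_Jmap_JinvMap_fin_two {M : Matrix (Fin 2) (Fin 2) R} (h : domJ M) :
    simRel (Jmap M) (JinvMap M) := by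
  obtain ⟨hM, he⟩ := domJ_fin_two_iff_isUnit.1 h
  obtain ⟨a, b, c, d, rfl⟩ := exists_units_eq_fin_two he
  exact simRel_Jmap_JinvMap_fin_two_units ((isUnit_fin_two_iff a b c d).1 hM).unit_spec

end TwoByTwo

/-- For `J` acting on `2×2` matrices:
`dom(J) = dom(J⁻¹) = M₂*(R) ∩ M₂⋆(R)`; `A = [[a,b],[c,d]]` belongs to this common
domain iff `a, b, c, d, db⁻¹ − ca⁻¹` are invertible; `J` maps `dom(J)` bijectively
onto itself and is given by the displayed formula; finally `J(A) ∼ J⁻¹(A)` and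
`J²(A) ∼ A` for every `A ∈ dom(J)`. -/
theorem two_by_two_J {R : Type*} [Ring R] :
    (∀ M : Matrix (Fin 2) (Fin 2) R, domJ M ↔ domJinv M) ∧
    (∀ M : Matrix (Fin 2) (Fin 2) R, domJ M ↔ (IsUnit M ∧ ∀ j k, IsUnit (M j k))) ∧
    (∀ a b c d : R,
      domJ (!![a, b; c, d] : Matrix (Fin 2) (Fin 2) R) ↔
        (IsUnit a ∧ IsUnit b ∧ IsUnit c ∧ IsUnit d ∧
          IsUnit (d * Ring.inverse b - c * Ring.inverse a))) ∧
    Set.BijOn Jmap {M : Matrix (Fin 2) (Fin 2) R | domJ M} {M | domJ M} ∧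
    (∀ a b c d : R, domJ (!![a, b; c, d] : Matrix (Fin 2) (Fin 2) R) →
      Jmap (!![a, b; c, d] : Matrix (Fin 2) (Fin 2) R) =
        !![a - b * Ring.inverse d * c, b - a * Ring.inverse c * d;
           c - d * Ring.inverse b * a, d - c * Ring.inverse a * b]) ∧
    (∀ M : Matrix (Fin 2) (Fin 2) R, domJ M → simRel (Jmap M) (JinvMap M)) ∧
    (∀ M : Matrix (Fin 2) (Fin 2) R, domJ M → simRel (Jmap (Jmap M)) M) := by
  have hbij : Set.BijOn Jmap {M : Matrix (Fin 2) (Fin 2) R | domJ M} {M | domJ M} := by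
    simpa only [domJ_fin_two_iff_domJinv] using bijOn_Jmap (R := R) (m := Fin 2)
  refine ⟨fun _ => domJ_fin_two_iff_domJinv, fun _ => domJ_fin_two_iff_isUnit, domJ_fin_two_iff,
    hbij, fun _ _ _ _ => Jmap_fin_two, fun _ => simRel_Jmap_JinvMap_fin_two, fun M h => ?_⟩
  simpa [JinvMap_Jmap h] using simRel_Jmap_JinvMap_fin_two (hbij.mapsTo h)
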